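/- Let x, y ∈ ℚₚⁿ with ‖x‖ₚ = ‖y‖ₚ = p^{-L} ≥ p^l for some integers L, l, and let 0 ≤ λ < α − n. Write x = p^L u, y = p^L v with ‖u‖ₚ = ‖v‖ₚ = 1. Then ∫_{‖y‖ₚ = ‖x‖ₚ} (1 + ‖x − y‖ₚ^{λ}) ‖y‖ₚ^{-α} dⁿy ≤ A(‖x‖ₚ^{-(α−n)} + ‖x‖ₚ^{-(α−n−λ)}) ≤ A'(p, l, α, n, λ) for positive constants A, A' independent of x. -/

import Mathlib

/-!
On the sphere `‖y‖ = ‖x‖` the ultrametric inequality gives `‖x - y‖ ≤ ‖x‖`, so the integrand is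
at most `(1 + ‖x‖^λ) ‖x‖^(-α)` and everything reduces to bounding the Haar measure of the ball
of radius `‖x‖ = p^k`. Choosing a `p`-adic digit in each coordinate covers the ball of radius
`p^(k+1)` by `p^n` translates of the ball of radius `p^k`, so this measure is at most `p^(nk)`
for `k ≥ 0`, while for `k < 0` the ball lies in the unit ball. As `‖x‖ ≥ p^l`, both cases give
the bound `max 1 (p^(-ln)) ‖x‖^n`.
-/

open MeasureTheory Metric

namespace Padic

variable {p : ℕ} [Fact p.Prime]

theorem exists_norm_sub_natCast_le_inv {a : ℚ_[p]} (ha : ‖a‖ ≤ 1) :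
    ∃ c : Fin p, ‖a - c‖ ≤ (p : ℝ)⁻¹ := by
  obtain ⟨c, hcp, hc⟩ := PadicInt.exists_mem_range ⟨a, ha⟩
  refine ⟨⟨c, hcp⟩, ?_⟩
  rw [IsLocalRing.mem_maximalIdeal, PadicInt.mem_nonunits] at hc
  have : ‖a - c‖ < (p : ℝ) ^ ((-1 : ℤ) + 1) := by rw [neg_add_cancel, zpow_zero]; exact hc
  simpa using (norm_le_pow_iff_norm_lt_pow_add_one _ _).2 this

theorem exists_norm_sub_zpow_mul_natCast_le (k : ℤ) {a : ℚ_[p]} (ha : ‖a‖ ≤ (p : ℝ) ^ (k + 1)) :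
    ∃ c : Fin p, ‖a - (p : ℚ_[p]) ^ (-(k + 1)) * c‖ ≤ (p : ℝ) ^ k := by
  have hp : (0 : ℝ) < p := by exact_mod_cast (Fact.out : p.Prime).pos
  have hp' : (p : ℚ_[p]) ≠ 0 := by exact_mod_cast (Fact.out : p.Prime).ne_zero
  obtain ⟨c, hc⟩ := exists_norm_sub_natCast_le_inv (a := (p : ℚ_[p]) ^ (k + 1) * a) (by
    rw [norm_mul, norm_p_zpow, zpow_neg, inv_mul_le_one₀ (by positivity)]
    exact ha)
  refine ⟨c, ?_⟩
  have : a - (p : ℚ_[p]) ^ (-(k + 1)) * c =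
      (p : ℚ_[p]) ^ (-(k + 1)) * ((p : ℚ_[p]) ^ (k + 1) * a - c) := by
    rw [mul_sub, ← mul_assoc, ← zpow_add₀ hp', neg_add_cancel, zpow_zero, one_mul]
  rw [this, norm_mul, norm_p_zpow, neg_neg]
  calc (p : ℝ) ^ (k + 1) * ‖(p : ℚ_[p]) ^ (k + 1) * a - c‖
        ≤ (p : ℝ) ^ (k + 1) * (p : ℝ)⁻¹ := by gcongr
    _ = (p : ℝ) ^ k := by rw [zpow_add_one₀ hp.ne', mul_inv_cancel_right₀ hp.ne']

end Padic

section PadicBall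

variable {p : ℕ} [Fact p.Prime] {n : ℕ}

theorem closedBall_zpow_succ_subset_iUnion (k : ℤ) :
    closedBall (0 : Fin n → ℚ_[p]) ((p : ℝ) ^ (k + 1)) ⊆
      ⋃ c : Fin n → Fin p, closedBall (fun i ↦ (p : ℚ_[p]) ^ (-(k + 1)) * c i) ((p : ℝ) ^ k) := by
  intro y hy
  rw [mem_closedBall_zero_iff, pi_norm_le_iff_of_nonneg (by positivity)] at hy
  choose c hc using fun i ↦ Padic.exists_norm_sub_zpow_mul_natCast_le k (hy i)
  exact Set.mem_iUnion.2
    ⟨c, mem_closedBall_iff_norm.2 <| (pi_norm_le_iff_of_nonneg (by positivity)).2 hc⟩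

variable [MeasurableSpace (Fin n → ℚ_[p])] [BorelSpace (Fin n → ℚ_[p])]
  (μ : Measure (Fin n → ℚ_[p])) [μ.IsAddHaarMeasure]

theorem measure_closedBall_zpow_succ_le (k : ℤ) :
    μ (closedBall 0 ((p : ℝ) ^ (k + 1))) ≤ p ^ n * μ (closedBall 0 ((p : ℝ) ^ k)) :=
  calc μ (closedBall 0 ((p : ℝ) ^ (k + 1)))
      ≤ ∑' c : Fin n → Fin p,
          μ (closedBall (fun i ↦ (p : ℚ_[p]) ^ (-(k + 1)) * c i) ((p : ℝ) ^ k)) :=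
        (measure_mono (closedBall_zpow_succ_subset_iUnion k)).trans (measure_iUnion_le _)
    _ = p ^ n * μ (closedBall 0 ((p : ℝ) ^ k)) := by
        simp [Measure.addHaar_closedBall_center]

theorem measure_closedBall_pow_le (k : ℕ) :
    μ (closedBall 0 ((p : ℝ) ^ k)) ≤ (p ^ n) ^ k * μ (closedBall 0 1) := by
  induction k with
  | zero => simp
  | succ k ih =>
    calc μ (closedBall 0 ((p : ℝ) ^ (k + 1)))
        ≤ p ^ n * μ (closedBall 0 ((p : ℝ) ^ k)) := by
          exact_mod_cast measure_closedBall_zpow_succ_le μ k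
      _ ≤ p ^ n * ((p ^ n) ^ k * μ (closedBall 0 1)) := by gcongr
      _ = (p ^ n) ^ (k + 1) * μ (closedBall 0 1) := by ring

theorem measureReal_closedBall_zpow_le (hμ : μ (closedBall 0 1) = 1) (k : ℤ) :
    μ.real (closedBall 0 ((p : ℝ) ^ k)) ≤ max 1 (((p : ℝ) ^ k) ^ n) := by
  have hp : (1 : ℝ) ≤ p := by exact_mod_cast (Fact.out : p.Prime).one_le
  rcases le_or_gt 0 k with hk | hk
  · lift k to ℕ using hk
    refine le_max_of_le_right ?_
    have := measure_closedBall_pow_le μ k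
    rw [hμ, mul_one] at this
    simpa [measureReal_def, ← pow_mul, mul_comm] using ENNReal.toReal_mono (by simp) this
  · refine le_max_of_le_left ?_
    calc μ.real (closedBall 0 ((p : ℝ) ^ k)) ≤ μ.real (closedBall 0 1) :=
          measureReal_mono (closedBall_subset_closedBall (zpow_le_one_of_nonpos₀ hp hk.le))
            (by simp [hμ])
      _ = 1 := by simp [measureReal_def, hμ]

end PadicBall

theorem one_add_rpow_mul_rpow_le_of_norm_eq {E : Type*} [SeminormedAddCommGroup E]
    [IsUltrametricDist E] {x y : E} (h : ‖y‖ = ‖x‖) {lam : ℝ} (hlam : 0 ≤ lam) (α : ℝ) :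
    (1 + ‖x - y‖ ^ lam) * ‖y‖ ^ (-α) ≤ (1 + ‖x‖ ^ lam) * ‖x‖ ^ (-α) := by
  have hxy : ‖x - y‖ ≤ ‖x‖ := by
    simpa [sub_eq_add_neg, h] using IsUltrametricDist.norm_add_le_max x (-y)
  rw [h]
  gcongr

theorem setIntegral_sphere_le {E : Type*} [NormedAddCommGroup E] [IsUltrametricDist E]
    [ProperSpace E] [MeasurableSpace E] [BorelSpace E] (μ : Measure E)
    [IsFiniteMeasureOnCompacts μ] (x : E) {lam : ℝ} (hlam : 0 ≤ lam) (α : ℝ) :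
    ∫ y in {y : E | ‖y‖ = ‖x‖}, (1 + ‖x - y‖ ^ lam) * ‖y‖ ^ (-α) ∂μ ≤
      (1 + ‖x‖ ^ lam) * ‖x‖ ^ (-α) * μ.real (closedBall 0 ‖x‖) := by
  have hsub : {y : E | ‖y‖ = ‖x‖} ⊆ closedBall 0 ‖x‖ := fun _ hy ↦
    mem_closedBall_zero_iff.2 hy.le
  have hfin : μ {y : E | ‖y‖ = ‖x‖} < ⊤ := (measure_mono hsub).trans_lt measure_closedBall_lt_top
  have hC : ∀ y ∈ {y : E | ‖y‖ = ‖x‖},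
      ‖(1 + ‖x - y‖ ^ lam) * ‖y‖ ^ (-α)‖ ≤ (1 + ‖x‖ ^ lam) * ‖x‖ ^ (-α) := fun y hy ↦ by
    rw [Real.norm_of_nonneg (by positivity)]
    exact one_add_rpow_mul_rpow_le_of_norm_eq hy hlam α
  calc _ ≤ ‖∫ y in {y : E | ‖y‖ = ‖x‖}, (1 + ‖x - y‖ ^ lam) * ‖y‖ ^ (-α) ∂μ‖ :=
        Real.le_norm_self _
    _ ≤ (1 + ‖x‖ ^ lam) * ‖x‖ ^ (-α) * μ.real {y : E | ‖y‖ = ‖x‖} :=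
        norm_setIntegral_le_of_norm_le_const hfin hC
    _ ≤ (1 + ‖x‖ ^ lam) * ‖x‖ ^ (-α) * μ.real (closedBall 0 ‖x‖) := by
        gcongr
        exact measure_closedBall_lt_top.ne

theorem max_one_pow_le_mul {r₀ r : ℝ} (h₀ : 0 < r₀) (h : r₀ ≤ r) (n : ℕ) :
    max 1 (r ^ n) ≤ max 1 (r₀ ^ n)⁻¹ * r ^ n := by
  have hr₀ : 0 < r₀ ^ n := by positivity
  have hr : 0 ≤ r ^ n := pow_nonneg (h₀.le.trans h) n
  refine max_le ?_ (le_mul_of_one_le_left hr (le_max_left _ _))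
  calc (1 : ℝ) = (r₀ ^ n)⁻¹ * r₀ ^ n := (inv_mul_cancel₀ hr₀.ne').symm
    _ ≤ max 1 (r₀ ^ n)⁻¹ * r ^ n := by gcongr; exact le_max_right _ _

theorem one_add_rpow_mul_rpow_neg_mul_pow {r : ℝ} (hr : 0 < r) (lam α : ℝ) (n : ℕ) :
    (1 + r ^ lam) * r ^ (-α) * r ^ n = r ^ (-(α - n)) + r ^ (-(α - n - lam)) := by
  rw [← Real.rpow_natCast, add_mul, add_mul, one_mul, ← Real.rpow_add hr, mul_assoc,
    ← Real.rpow_add hr, ← Real.rpow_add hr]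
  congr 2 <;> ring

/-- estimate of the integral over the sphere `{‖y‖ = ‖x‖}`. -/
theorem stmt7 {p : ℕ} [Fact p.Prime] {n : ℕ}
    [MeasurableSpace (Fin n → ℚ_[p])] [BorelSpace (Fin n → ℚ_[p])]
    (μ : Measure (Fin n → ℚ_[p])) [μ.IsAddHaarMeasure]
    (hμ : μ (Metric.closedBall 0 1) = 1)
    (α lam : ℝ) (hlam0 : 0 ≤ lam) (hlam : lam < α - n) (l : ℤ) :
    ∃ A > (0 : ℝ), ∃ A' > (0 : ℝ), ∀ (L : ℤ) (x : Fin n → ℚ_[p]),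
      ‖x‖ = (p : ℝ) ^ (-L) → (p : ℝ) ^ l ≤ ‖x‖ →
      (∫ y in {y : Fin n → ℚ_[p] | ‖y‖ = ‖x‖}, (1 + ‖x - y‖ ^ lam) * ‖y‖ ^ (-α) ∂μ) ≤
          A * (‖x‖ ^ (-(α - n)) + ‖x‖ ^ (-(α - n - lam))) ∧
      (∫ y in {y : Fin n → ℚ_[p] | ‖y‖ = ‖x‖}, (1 + ‖x - y‖ ^ lam) * ‖y‖ ^ (-α) ∂μ) ≤ A' := by
  have hr₀ : (0 : ℝ) < (p : ℝ) ^ l := zpow_pos (by exact_mod_cast (Fact.out : p.Prime).pos) l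
  set K : ℝ := max 1 (((p : ℝ) ^ l) ^ n)⁻¹
  refine ⟨K, lt_max_of_lt_left one_pos,
    K * (((p : ℝ) ^ l) ^ (-(α - n)) + ((p : ℝ) ^ l) ^ (-(α - n - lam))), by positivity,
    fun L x hx hl ↦ ?_⟩
  have hr : 0 < ‖x‖ := hr₀.trans_le hl
  have hball : μ.real (closedBall 0 ‖x‖) ≤ K * ‖x‖ ^ n :=
    hx ▸ (measureReal_closedBall_zpow_le μ hμ (-L)).trans (max_one_pow_le_mul hr₀ (hx ▸ hl) n)
  have hbound : ∫ y in {y | ‖y‖ = ‖x‖}, (1 + ‖x - y‖ ^ lam) * ‖y‖ ^ (-α) ∂μ ≤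
      K * (‖x‖ ^ (-(α - n)) + ‖x‖ ^ (-(α - n - lam))) :=
    calc _ ≤ (1 + ‖x‖ ^ lam) * ‖x‖ ^ (-α) * μ.real (closedBall 0 ‖x‖) :=
          setIntegral_sphere_le μ x hlam0 α
      _ ≤ (1 + ‖x‖ ^ lam) * ‖x‖ ^ (-α) * (K * ‖x‖ ^ n) := by gcongr
      _ = K * (‖x‖ ^ (-(α - n)) + ‖x‖ ^ (-(α - n - lam))) := by
          rw [← one_add_rpow_mul_rpow_neg_mul_pow hr]; ring
  refine ⟨hbound, hbound.trans ?_⟩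
  gcongr K * (?_ + ?_) <;> exact Real.rpow_le_rpow_of_nonpos hr₀ hl (by linarith)
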